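/- For every integer n ≥ 2 and all i, j ∈ {1,…,n−1}, the restriction of the Bruhat order to the set B_n^{(i,j)} is a total order; that is, any two bigrassmannian permutations with unique left descent i and unique right descent j are comparable in the Bruhat order. -/

import Mathlib

namespace Paper

/-- The simple transposition `s_i = (i, i+1)` (1-based) in `S_n`, realized as a
permutation of `Fin n`. For `i` outside `{1, …, n-1}` we set `s i = 1`. -/
def s (n i : ℕ) : Equiv.Perm (Fin n) :=
  if h : 1 ≤ i ∧ i < n then Equiv.swap ⟨i - 1, by omega⟩ ⟨i, by omega⟩ else 1

/-- The length of a permutation: its number of inversions. -/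
def len {n : ℕ} (w : Equiv.Perm (Fin n)) : ℕ :=
  (Finset.univ.filter (fun p : Fin n × Fin n => p.1 < p.2 ∧ w p.2 < w p.1)).card

/-- `i` is a left descent of `w` if `1 ≤ i ≤ n-1` and `ℓ(s_i w) < ℓ(w)`. -/
def IsLeftDescent {n : ℕ} (w : Equiv.Perm (Fin n)) (i : ℕ) : Prop :=
  1 ≤ i ∧ i ≤ n - 1 ∧ len (s n i * w) < len w

/-- `i` is a right descent of `w` if `1 ≤ i ≤ n-1` and `ℓ(w s_i) < ℓ(w)`. -/
def IsRightDescent {n : ℕ} (w : Equiv.Perm (Fin n)) (i : ℕ) : Prop :=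
  1 ≤ i ∧ i ≤ n - 1 ∧ len (w * s n i) < len w

/-- A permutation is bigrassmannian if it has exactly one left descent and
exactly one right descent. -/
def Bigrassmannian {n : ℕ} (w : Equiv.Perm (Fin n)) : Prop :=
  (∃! i, IsLeftDescent w i) ∧ (∃! j, IsRightDescent w j)

/-- One step of the Bruhat order: `w ⋖ t * w` for a transposition `t`
with `ℓ(w) < ℓ(t w)`. -/
def BruhatStep {n : ℕ} (w w' : Equiv.Perm (Fin n)) : Prop :=
  ∃ a b : Fin n, a ≠ b ∧ w' = Equiv.swap a b * w ∧ len w < len w'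

/-- The Bruhat order on `S_n`: the partial order generated by `w < tw` whenever
`t` is a transposition and `ℓ(w) < ℓ(tw)`. -/
def BruhatLE {n : ℕ} : Equiv.Perm (Fin n) → Equiv.Perm (Fin n) → Prop :=
  Relation.ReflTransGen BruhatStep

/-- Strict Bruhat order. -/
def BruhatLT {n : ℕ} (x y : Equiv.Perm (Fin n)) : Prop :=
  BruhatLE x y ∧ x ≠ y

/-- The product `s_a s_{a+1} ⋯ s_b` of consecutive simple transpositions. -/
def ascRun (n a b : ℕ) : Equiv.Perm (Fin n) :=
  ((List.range (b + 1 - a)).map (fun t => s n (a + t))).prod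

/-- For `i ≤ j`: `b(i,j,k) = (s_i ⋯ s_{j+k})(s_{i-1} ⋯ s_{j+k-1}) ⋯ (s_{i-k} ⋯ s_j)`. -/
def bAux (n i j k : ℕ) : Equiv.Perm (Fin n) :=
  ((List.range (k + 1)).map (fun m => ascRun n (i - m) (j + k - m))).prod

/-- The bigrassmannian permutation `b(i,j,k)`; for `j < i` it is `b(j,i,k)⁻¹`. -/
def b (n i j k : ℕ) : Equiv.Perm (Fin n) :=
  if i ≤ j then bAux n i j k else (bAux n j i k)⁻¹

/-- The value `w(i)` of a permutation `w ∈ S_n` at `i ∈ {1, …, n}`, 1-based. -/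
def act {n : ℕ} (w : Equiv.Perm (Fin n)) (i : ℕ) : ℕ :=
  if h : 1 ≤ i ∧ i ≤ n then ((w ⟨i - 1, by omega⟩ : Fin n) : ℕ) + 1 else i

/-- The essential set of a permutation `w ∈ S_n`. -/
def Ess {n : ℕ} (w : Equiv.Perm (Fin n)) : Set (ℕ × ℕ) :=
  {p | 1 ≤ p.1 ∧ p.1 ≤ n - 1 ∧ 1 ≤ p.2 ∧ p.2 ≤ n - 1 ∧
    p.1 < act w⁻¹ p.2 ∧ p.2 < act w p.1 ∧
    act w (p.1 + 1) ≤ p.2 ∧ act w⁻¹ (p.2 + 1) ≤ p.1}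

/-- The rank function `r_w(i,j) = |{k ≤ i : w(k) ≤ j}|` (1-based). -/
def rnk {n : ℕ} (w : Equiv.Perm (Fin n)) (i j : ℕ) : ℕ :=
  ((Finset.Icc 1 i).filter (fun k => act w k ≤ j)).card

/-- The co-rank function `t_w(i,j) = min{i,j} - r_w(i,j)`. -/
def cork {n : ℕ} (w : Equiv.Perm (Fin n)) (i j : ℕ) : ℕ :=
  min i j - rnk w i j

/-- The set of bigrassmannian permutations `y ≤ w` in Bruhat order. -/
def BSet {n : ℕ} (w : Equiv.Perm (Fin n)) : Set (Equiv.Perm (Fin n)) :=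
  {y | Bigrassmannian y ∧ BruhatLE y w}

/-- The set of Bruhat-maximal elements of `BSet w`. -/
def BM {n : ℕ} (w : Equiv.Perm (Fin n)) : Set (Equiv.Perm (Fin n)) :=
  {y ∈ BSet w | ∀ z ∈ BSet w, BruhatLE y z → z = y}

/-!
Write permutations 0-based, as functions on `ℕ`. If `j` is the only right descent of `w`, then `w`
is increasing on `[0, j-1]` and on `[j, n)`, so `w t ≥ t` on the first interval and `w t ≤ t` on the
second; likewise for `w⁻¹` with `i`. Playing these four facts against each other shows that `w`
exchanges two adjacent blocks of positions: with `k = w (j-1) - (i-1)`, it moves `[j-k, j)` up by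
`d = i - j + k` past `[j, j+d)`. Passing from `k` to `k + 1` takes `k + d + 1` adjacent
transpositions, each creating one inversion: move the smallest entry of the affected window right
past the `k` large entries, then its largest entry left past the `d` small ones, and finally swap
these two. Hence `B_n^{(i,j)}` is a single Bruhat chain indexed by `k`.
-/

open Equiv

section Length
variable {n : ℕ}

theorem len_inv (w : Perm (Fin n)) : len w⁻¹ = len w := by
  unfold len
  apply Finset.card_bij' (fun p _ => (w⁻¹ p.2, w⁻¹ p.1)) (fun p _ => (w p.2, w p.1))
  all_goals intro p hp
  all_goals simp_all

theorem swap_lt_swap_of_lt {a b p q : Fin n} (hab : (a : ℕ) + 1 = b) (hpq : p < q)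
    (hne : ¬(p = a ∧ q = b)) : swap a b p < swap a b q := by
  simp only [swap_apply_def]
  simp only [Fin.ext_iff, Fin.lt_def] at *
  split_ifs <;> omega

/- `(p, q) ↦ (swap a b p, swap a b q)` maps the inversions of `w` injectively to inversions of
`w * swap a b` other than `(a, b)`. -/
theorem len_lt_len_mul_swap (w : Perm (Fin n)) {a b : Fin n} (hab : (a : ℕ) + 1 = b)
    (h : w a < w b) : len w < len (w * swap a b) := by
  have hlt : a < b := Fin.lt_def.mpr (by omega)
  refine (Finset.card_le_card_of_injOn (fun p : Fin n × Fin n => (swap a b p.1, swap a b p.2))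
    ?_ ?_).trans_lt (Finset.card_erase_lt_of_mem (a := (a, b)) ?_)
  · rintro ⟨p, q⟩ hpq
    simp only [Finset.mem_coe, Finset.mem_erase, Finset.mem_filter] at hpq ⊢
    simp only [Finset.mem_univ, true_and, ne_eq, Prod.mk.injEq, Perm.mul_apply,
      swap_apply_self] at hpq ⊢
    have hne : ¬(p = a ∧ q = b) := by
      rintro ⟨rfl, rfl⟩
      exact lt_asymm h hpq.2
    refine ⟨?_, swap_lt_swap_of_lt hab hpq.1 hne, hpq.2⟩
    rintro ⟨hp, hq⟩
    rw [swap_apply_eq_iff, swap_apply_left] at hp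
    rw [swap_apply_eq_iff, swap_apply_right] at hq
    exact lt_asymm hlt (hp ▸ hq ▸ hpq.1)
  · rintro ⟨p, q⟩ - ⟨p', q'⟩ - h
    simp only [Prod.mk.injEq, EmbeddingLike.apply_eq_iff_eq] at h
    rw [h.1, h.2]
  · simp only [Finset.mem_filter]
    simpa [hlt] using h

theorem s_succ (a : ℕ) (ha : a + 1 < n) : s n (a + 1) = swap ⟨a, by omega⟩ ⟨a + 1, ha⟩ := by
  simp [s, ha]

theorem s_inv (i : ℕ) : (s n i)⁻¹ = s n i := by
  unfold s
  split_ifs <;> simp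

theorem isLeftDescent_iff_isRightDescent_inv (w : Perm (Fin n)) (i : ℕ) :
    IsLeftDescent w i ↔ IsRightDescent w⁻¹ i := by
  have : len (s n i * w) = len (w⁻¹ * s n i) := by
    rw [← len_inv, mul_inv_rev, s_inv]
  rw [IsLeftDescent, IsRightDescent, this, len_inv]

end Length

section NatFun
variable {n : ℕ}

def natFun (w : Perm (Fin n)) (t : ℕ) : ℕ :=
  if h : t < n then w ⟨t, h⟩ else t

theorem natFun_lt (w : Perm (Fin n)) {t : ℕ} (ht : t < n) : natFun w t < n := by
  simp [natFun, ht]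

theorem natFun_inv_natFun (w : Perm (Fin n)) {t : ℕ} (ht : t < n) :
    natFun w⁻¹ (natFun w t) = t := by
  simp [natFun, ht]

theorem natFun_natFun_inv (w : Perm (Fin n)) {v : ℕ} (hv : v < n) :
    natFun w (natFun w⁻¹ v) = v := by
  simpa using natFun_inv_natFun w⁻¹ hv

theorem isRightDescent_succ_iff (w : Perm (Fin n)) {a : ℕ} (ha : a + 1 < n) :
    IsRightDescent w (a + 1) ↔ natFun w (a + 1) < natFun w a := by
  set A : Fin n := ⟨a, by omega⟩
  set B : Fin n := ⟨a + 1, ha⟩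
  have hAB : (A : ℕ) + 1 = B := rfl
  have hval : natFun w (a + 1) < natFun w a ↔ w B < w A := by
    simp [natFun, ha, show a < n by omega, A, B]
  rw [hval, IsRightDescent, s_succ a ha]
  refine ⟨fun hlen => ?_, fun hlt => ⟨by omega, by omega, ?_⟩⟩
  · rcases lt_trichotomy (w A) (w B) with hlt | he | hgt
    · exact absurd (len_lt_len_mul_swap w hAB hlt) hlen.2.2.not_gt
    · exact absurd (w.injective he) (by simp [A, B, Fin.ext_iff])
    · exact hgt
  · have := len_lt_len_mul_swap (w * swap A B) hAB (by simpa using hlt)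
    rwa [mul_assoc, swap_mul_self, mul_one] at this

/-- `w` has exactly one descent, at the 0-based positions `c, c + 1`. -/
def IsGrassmannianAt (w : Perm (Fin n)) (c : ℕ) : Prop :=
  c + 1 < n ∧ natFun w (c + 1) < natFun w c ∧
    ∀ t, t + 1 < n → t ≠ c → natFun w t < natFun w (t + 1)

theorem isGrassmannianAt_of_unique_isRightDescent {w : Perm (Fin n)} {j : ℕ}
    (hj : IsRightDescent w j) (huniq : ∀ m, IsRightDescent w m → m = j) :
    IsGrassmannianAt w (j - 1) := by
  have ⟨hj1, hjn, _⟩ := hj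
  have hj' : j - 1 + 1 = j := by omega
  refine ⟨by omega, ?_, fun t ht htj => ?_⟩
  · rw [← isRightDescent_succ_iff w (by omega), hj']
    exact hj
  · have hnot : ¬ natFun w (t + 1) < natFun w t := fun hlt =>
      htj (by have := huniq _ ((isRightDescent_succ_iff w ht).mpr hlt); omega)
    refine lt_of_le_of_ne (not_lt.mp hnot) fun he => ?_
    have := congrArg (natFun w⁻¹) he
    rw [natFun_inv_natFun w (by omega), natFun_inv_natFun w ht] at this
    omega

end NatFun

theorem add_sub_le_of_lt_succ {f : ℕ → ℕ} {a b : ℕ}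
    (hf : ∀ t, a ≤ t → t < b → f t < f (t + 1)) {s t : ℕ} (has : a ≤ s) (hst : s ≤ t)
    (htb : t ≤ b) : f s + (t - s) ≤ f t := by
  induction t, hst using Nat.le_induction with
  | base => simp
  | succ t hst ih =>
    have := hf t (by omega) (by omega)
    have := ih (by omega)
    omega

namespace IsGrassmannianAt
variable {n c : ℕ} {w : Perm (Fin n)}

theorem add_sub_le_left (hw : IsGrassmannianAt w c) {s t : ℕ} (hst : s ≤ t) (htc : t ≤ c) :
    natFun w s + (t - s) ≤ natFun w t :=
  add_sub_le_of_lt_succ (fun u _ hu => hw.2.2 u (by have := hw.1; omega) (by omega))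
    (Nat.zero_le s) hst htc

theorem add_sub_le_right (hw : IsGrassmannianAt w c) {s t : ℕ} (hcs : c < s) (hst : s ≤ t)
    (htn : t < n) : natFun w s + (t - s) ≤ natFun w t :=
  add_sub_le_of_lt_succ (b := n - 1) (fun u hu hun => hw.2.2 u (by omega) (by omega))
    hcs hst (by omega)

theorem le_natFun (hw : IsGrassmannianAt w c) {t : ℕ} (htc : t ≤ c) : t ≤ natFun w t := by
  have := hw.add_sub_le_left (Nat.zero_le t) htc
  omega

theorem natFun_le (hw : IsGrassmannianAt w c) {t : ℕ} (hct : c < t) (htn : t < n) :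
    natFun w t ≤ t := by
  have := hw.add_sub_le_right (t := n - 1) hct (by omega) (by omega)
  have := natFun_lt w (t := n - 1) (by omega)
  omega

theorem lt_natFun (hw : IsGrassmannianAt w c) : c < natFun w c := by
  have ⟨hcn, hdesc, _⟩ := hw
  refine lt_of_le_of_ne (hw.le_natFun le_rfl) fun hfix => ?_
  set u := natFun w (c + 1)
  have hu : natFun w u = u := by
    have := hw.le_natFun (t := u) (by omega)
    have := hw.add_sub_le_left (s := u) (t := c) (by omega) le_rfl
    omega
  have := congrArg (natFun w⁻¹) hu
  rw [natFun_inv_natFun w (by omega), natFun_inv_natFun w hcn] at this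
  omega

end IsGrassmannianAt

section Classification
variable {n ii jj : ℕ} {w : Perm (Fin n)}

/- With `k = natFun w jj - ii`, the block moved up by `w` starts at `P = jj + 1 - k`; the
hypothesis `P ≤ t` is written `jj + 1 + ii ≤ t + natFun w jj` to avoid truncated subtraction. -/

theorem lt_natFun_of_isGrassmannianAt (hF : IsGrassmannianAt w jj)
    (hG : IsGrassmannianAt w⁻¹ ii) : ii < natFun w jj := by
  by_contra! h
  have := hG.le_natFun h
  rw [natFun_inv_natFun w (by have := hF.1; omega)] at this
  have := hF.lt_natFun
  omega

theorem natFun_inv_succ_add_le (hF : IsGrassmannianAt w jj) (hG : IsGrassmannianAt w⁻¹ ii) :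
    natFun w⁻¹ (ii + 1) + (natFun w jj - ii) ≤ jj + 1 := by
  have hii := lt_natFun_of_isGrassmannianAt hF hG
  have := hG.add_sub_le_right (s := ii + 1) (t := natFun w jj) (by omega) (by omega)
    (natFun_lt w (by have := hF.1; omega))
  rw [natFun_inv_natFun w (by have := hF.1; omega)] at this
  omega

theorem natFun_eq_add (hF : IsGrassmannianAt w jj) (hG : IsGrassmannianAt w⁻¹ ii) {t : ℕ}
    (hPt : jj + 1 + ii ≤ t + natFun w jj) (htj : t ≤ jj) :
    natFun w t = t + (natFun w jj - jj) := by
  have hii := lt_natFun_of_isGrassmannianAt hF hG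
  have hq := natFun_inv_succ_add_le hF hG
  have hjj := hF.lt_natFun
  have hFq := natFun_natFun_inv w (v := ii + 1) (by have := hG.1; omega)
  have h1 := hF.add_sub_le_left (s := natFun w⁻¹ (ii + 1)) (t := jj + 1 + ii - natFun w jj)
    (by omega) (by omega)
  have h2 := hF.add_sub_le_left (s := jj + 1 + ii - natFun w jj) (t := t) (by omega) htj
  have h3 := hF.add_sub_le_left (s := t) (t := jj) htj le_rfl
  omega

theorem natFun_eq_self_of_lt (hF : IsGrassmannianAt w jj) (hG : IsGrassmannianAt w⁻¹ ii)
    {t : ℕ} (htP : t + natFun w jj < jj + 1 + ii) : natFun w t = t := by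
  have hii := lt_natFun_of_isGrassmannianAt hF hG
  have hq := natFun_inv_succ_add_le hF hG
  have hjj := hF.lt_natFun
  have hFP := natFun_eq_add hF hG (t := jj + 1 + ii - natFun w jj) (by omega) (by omega)
  have h1 := hF.le_natFun (t := t) (by omega)
  have h2 := hF.add_sub_le_left (s := t) (t := jj + 1 + ii - natFun w jj) (by omega) (by omega)
  have h3 := hG.le_natFun (t := natFun w t) (by omega)
  rw [natFun_inv_natFun w (by have := hF.1; omega)] at h3
  omega

theorem lt_natFun_inv (hF : IsGrassmannianAt w jj) (hG : IsGrassmannianAt w⁻¹ ii) {v : ℕ}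
    (hPv : jj + 1 + ii ≤ v + natFun w jj) (hvi : v ≤ ii) : jj < natFun w⁻¹ v := by
  have hFG := natFun_natFun_inv w (v := v) (by have := hG.1; omega)
  by_contra! h
  by_cases hlt : natFun w⁻¹ v + natFun w jj < jj + 1 + ii
  · have := natFun_eq_self_of_lt hF hG hlt
    omega
  · have := natFun_eq_add hF hG (not_lt.mp hlt) h
    omega

theorem natFun_inv_le (hF : IsGrassmannianAt w jj) (hG : IsGrassmannianAt w⁻¹ ii) :
    natFun w⁻¹ ii ≤ natFun w jj := by
  have hii := lt_natFun_of_isGrassmannianAt hF hG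
  have hjj := hF.lt_natFun
  have hFG := natFun_natFun_inv w (v := ii) (by have := hG.1; omega)
  have hGii := lt_natFun_inv hF hG (v := ii)
    (by have := natFun_inv_succ_add_le hF hG; omega) le_rfl
  by_contra! h
  have h1 := hF.add_sub_le_right (s := jj + 1) (t := natFun w⁻¹ ii) (by omega) (by omega)
    (natFun_lt _ (by have := hG.1; omega))
  have h2 := natFun_eq_self_of_lt hF hG (t := natFun w (jj + 1)) (by omega)
  have := congrArg (natFun w⁻¹) h2
  rw [natFun_inv_natFun w (natFun_lt w hF.1), natFun_inv_natFun w hF.1] at this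
  omega

theorem natFun_inv_eq_add (hF : IsGrassmannianAt w jj) (hG : IsGrassmannianAt w⁻¹ ii) {v : ℕ}
    (hPv : jj + 1 + ii ≤ v + natFun w jj) (hvi : v ≤ ii) :
    natFun w⁻¹ v = v + (natFun w jj - ii) := by
  have hii := lt_natFun_of_isGrassmannianAt hF hG
  have hq := natFun_inv_succ_add_le hF hG
  have h1 := hG.add_sub_le_left (s := jj + 1 + ii - natFun w jj) (t := v) (by omega) hvi
  have h2 := hG.add_sub_le_left (s := v) (t := ii) hvi le_rfl
  have h3 := lt_natFun_inv hF hG (v := jj + 1 + ii - natFun w jj) (by omega) (by omega)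
  have h4 := natFun_inv_le hF hG
  omega

theorem natFun_eq_sub (hF : IsGrassmannianAt w jj) (hG : IsGrassmannianAt w⁻¹ ii) {t : ℕ}
    (hjt : jj < t) (ht : t ≤ natFun w jj) : natFun w t = t - (natFun w jj - ii) := by
  have hii := lt_natFun_of_isGrassmannianAt hF hG
  have hq := natFun_inv_succ_add_le hF hG
  have h := natFun_inv_eq_add hF hG (v := t - (natFun w jj - ii)) (by omega) (by omega)
  rw [Nat.sub_add_cancel (by omega)] at h
  have := congrArg (natFun w) h
  rw [natFun_natFun_inv w (by have := hG.1; omega)] at this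
  exact this.symm

theorem natFun_eq_self_of_gt (hF : IsGrassmannianAt w jj) (hG : IsGrassmannianAt w⁻¹ ii)
    {t : ℕ} (ht : natFun w jj < t) (htn : t < n) : natFun w t = t := by
  have hii := lt_natFun_of_isGrassmannianAt hF hG
  have hjj := hF.lt_natFun
  have h1 := natFun_eq_sub hF hG hjj le_rfl
  have h2 := hF.add_sub_le_right (s := natFun w jj) (t := t) hjj ht.le htn
  have h3 := hF.natFun_le (t := t) (by omega) htn
  have h4 := hG.natFun_le (t := natFun w t) (by omega) (natFun_lt w htn)
  rw [natFun_inv_natFun w htn] at h4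
  omega

end Classification

section OfNatFun
variable {n : ℕ}

def PermutesBelow (n : ℕ) (f : ℕ → ℕ) : Prop :=
  Set.MapsTo f (Set.Iio n) (Set.Iio n) ∧ Set.InjOn f (Set.Iio n)

open Classical in
/-- The permutation of `Fin n` acting as `f`, or `1` if `f` does not permute `{0, …, n-1}`. -/
noncomputable def ofNatFun (n : ℕ) (f : ℕ → ℕ) : Perm (Fin n) :=
  if h : PermutesBelow n f then
    Equiv.ofBijective (fun t => ⟨f t, h.1 t.2⟩) <| Finite.injective_iff_bijective.mp
      fun a b hab => Fin.ext (h.2 a.2 b.2 (congrArg Fin.val hab))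
  else 1

theorem val_ofNatFun {f : ℕ → ℕ} (hf : PermutesBelow n f) (t : Fin n) :
    (ofNatFun n f t : ℕ) = f t := by
  simp [ofNatFun, hf]

theorem eq_ofNatFun {w : Perm (Fin n)} {f : ℕ → ℕ} (h : ∀ t < n, natFun w t = f t) :
    w = ofNatFun n f := by
  have hf : PermutesBelow n f := by
    refine ⟨fun t ht => ?_, fun a ha b hb hab => ?_⟩
    · rw [Set.mem_Iio] at ht ⊢
      rw [← h t ht]
      exact natFun_lt w ht
    · rw [Set.mem_Iio] at ha hb
      rw [← h a ha, ← h b hb] at hab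
      simpa [natFun_inv_natFun w ha, natFun_inv_natFun w hb] using congrArg (natFun w⁻¹) hab
  ext t
  rw [val_ofNatFun hf, ← h t t.2]
  simp [natFun]

theorem bruhatLE_ofNatFun_of_adjacent_ascent {f g : ℕ → ℕ} (hf : PermutesBelow n f)
    (hg : PermutesBelow n g) {a : ℕ} (ha : a + 1 < n) (hfa : f a < f (a + 1))
    (hg_left : g a = f (a + 1)) (hg_right : g (a + 1) = f a)
    (hg_ne : ∀ t, t ≠ a → t ≠ a + 1 → g t = f t) :
    BruhatLE (ofNatFun n f) (ofNatFun n g) := by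
  set A : Fin n := ⟨a, by omega⟩
  set B : Fin n := ⟨a + 1, ha⟩
  set c := ofNatFun n f
  have hcg : ofNatFun n g = c * swap A B := by
    ext t
    rw [val_ofNatFun hg, Perm.mul_apply, val_ofNatFun hf, swap_apply_def]
    simp only [A, B, Fin.ext_iff]
    split_ifs with h1 h2
    · rw [h1, hg_left]
    · rw [h2, hg_right]
    · exact hg_ne t h1 h2
  have hlt : c A < c B := by
    rw [Fin.lt_def, val_ofNatFun hf, val_ofNatFun hf]
    exact hfa
  refine Relation.ReflTransGen.single ⟨c A, c B, hlt.ne, ?_, ?_⟩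
  · rw [hcg, swap_apply_apply]
    group
  · rw [hcg]
    exact len_lt_len_mul_swap c rfl hlt

end OfNatFun

def blockSwap (P k d t : ℕ) : ℕ :=
  if P ≤ t ∧ t < P + k then t + d else if P + k ≤ t ∧ t < P + k + d then t - k else t

theorem permutesBelow_blockSwap {n P k d : ℕ} (h : P + k + d ≤ n) :
    PermutesBelow n (blockSwap P k d) := by
  refine ⟨fun t ht => ?_, fun a ha b hb hab => ?_⟩ <;>
    simp only [Set.mem_Iio, blockSwap] at * <;> split_ifs at * <;> omega

theorem IsGrassmannianAt.exists_eq_ofNatFun_blockSwap {n ii jj : ℕ} {w : Perm (Fin n)}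
    (hF : IsGrassmannianAt w jj) (hG : IsGrassmannianAt w⁻¹ ii) :
    ∃ k, k ≤ jj + 1 ∧ jj < ii + k ∧ ii + k < n ∧
      w = ofNatFun n (blockSwap (jj + 1 - k) k (ii + k - jj)) := by
  have hii := lt_natFun_of_isGrassmannianAt hF hG
  have hjj := hF.lt_natFun
  have hq := natFun_inv_succ_add_le hF hG
  have hjn := natFun_lt w (t := jj) (by have := hF.1; omega)
  refine ⟨natFun w jj - ii, by omega, by omega, by omega, eq_ofNatFun fun t ht => ?_⟩
  rcases lt_or_ge (t + natFun w jj) (jj + 1 + ii) with h1 | h1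
  · rw [natFun_eq_self_of_lt hF hG h1]
    simp only [blockSwap]
    split_ifs <;> omega
  rcases le_or_gt t jj with h2 | h2
  · rw [natFun_eq_add hF hG h1 h2]
    simp only [blockSwap]
    split_ifs <;> omega
  rcases le_or_gt t (natFun w jj) with h3 | h3
  · rw [natFun_eq_sub hF hG h2 h3]
    simp only [blockSwap]
    split_ifs <;> omega
  · rw [natFun_eq_self_of_gt hF hG h3 ht]
    simp only [blockSwap]
    split_ifs <;> omega

/-- `blockSwap (P + 1) k d` in which, in one-line notation, the entry `P` has moved `r` places
to the right and the entry `P + k + d + 1` has moved `m` places to the left. -/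
def blockSwapMove (P k d r m t : ℕ) : ℕ :=
  if t < P then t
  else if t < P + r then t + d + 1
  else if t = P + r then P
  else if t ≤ P + k then t + d
  else if t + m ≤ P + k + d then t - k
  else if t + m = P + k + d + 1 then P + k + d + 1
  else if t ≤ P + k + d + 1 then t - k - 1
  else t

section BlockSwapMove
variable {n P k d : ℕ}

set_option maxHeartbeats 400000 in
theorem permutesBelow_blockSwapMove {r m : ℕ} (hr : r ≤ k) (hm : m ≤ d)
    (h : P + k + d + 1 < n) : PermutesBelow n (blockSwapMove P k d r m) := by
  refine ⟨fun t ht => ?_, fun a ha b hb hab => ?_⟩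
  · simp only [Set.mem_Iio, blockSwapMove] at ht ⊢
    split_ifs <;> omega
  · simp only [Set.mem_Iio, blockSwapMove] at ha hb hab
    split_ifs at hab <;> omega

theorem blockSwapMove_zero_zero : blockSwapMove P k d 0 0 = blockSwap (P + 1) k d := by
  funext t
  simp only [blockSwapMove, blockSwap]
  split_ifs <;> omega

theorem bruhatLE_blockSwapMove_right {m : ℕ} (hm : m ≤ d) (h : P + k + d + 1 < n) :
    ∀ r ≤ k, BruhatLE (ofNatFun n (blockSwapMove P k d 0 m))
      (ofNatFun n (blockSwapMove P k d r m)) := by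
  intro r
  induction r with
  | zero => exact fun _ => Relation.ReflTransGen.refl
  | succ r ih =>
    intro hr
    refine (ih (by omega)).trans <| bruhatLE_ofNatFun_of_adjacent_ascent
      (permutesBelow_blockSwapMove (by omega) hm h) (permutesBelow_blockSwapMove hr hm h)
      (a := P + r) (by omega) ?_ ?_ ?_ fun t ht ht' => ?_
    · simp (disch := omega) only [blockSwapMove, if_pos, if_neg, ↓reduceIte]
      omega
    · simp (disch := omega) only [blockSwapMove, if_pos, if_neg]
      omega
    · simp (disch := omega) only [blockSwapMove, if_pos, if_neg, ↓reduceIte]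
    · simp only [blockSwapMove]
      split_ifs <;> omega

theorem bruhatLE_blockSwapMove_left {r : ℕ} (hr : r ≤ k) (h : P + k + d + 1 < n) :
    ∀ m ≤ d, BruhatLE (ofNatFun n (blockSwapMove P k d r 0))
      (ofNatFun n (blockSwapMove P k d r m)) := by
  intro m
  induction m with
  | zero => exact fun _ => Relation.ReflTransGen.refl
  | succ m ih =>
    intro hm
    refine (ih (by omega)).trans <| bruhatLE_ofNatFun_of_adjacent_ascent
      (permutesBelow_blockSwapMove hr (by omega) h) (permutesBelow_blockSwapMove hr hm h)
      (a := P + k + d - m) (by omega) ?_ ?_ ?_ fun t ht ht' => ?_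
    · simp (disch := omega) only [blockSwapMove, if_pos, if_neg]
      omega
    · simp (disch := omega) only [blockSwapMove, if_pos, if_neg]
    · simp (disch := omega) only [blockSwapMove, if_pos, if_neg]
      omega
    · simp only [blockSwapMove]
      split_ifs <;> omega

theorem bruhatLE_blockSwap_succ (h : P + k + d + 1 < n) :
    BruhatLE (ofNatFun n (blockSwap (P + 1) k d)) (ofNatFun n (blockSwap P (k + 1) (d + 1))) := by
  rw [← blockSwapMove_zero_zero]
  refine (bruhatLE_blockSwapMove_right (Nat.zero_le d) h k le_rfl).trans <|
    (bruhatLE_blockSwapMove_left le_rfl h d le_rfl).trans <|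
    bruhatLE_ofNatFun_of_adjacent_ascent (permutesBelow_blockSwapMove le_rfl le_rfl h)
      (permutesBelow_blockSwap (by omega)) (a := P + k) (by omega) ?_ ?_ ?_ fun t ht ht' => ?_
  · simp (disch := omega) only [blockSwapMove, if_pos, if_neg, ↓reduceIte]
    omega
  · simp (disch := omega) only [blockSwapMove, blockSwap, if_pos, if_neg]
    omega
  · simp (disch := omega) only [blockSwapMove, blockSwap, if_pos, if_neg, ↓reduceIte]
    omega
  · simp only [blockSwapMove, blockSwap]
    split_ifs <;> omega

end BlockSwapMove

theorem bruhatLE_blockSwap_of_le {n ii jj k₁ k₂ : ℕ} (hk : k₁ ≤ k₂) (hk₂ : k₂ ≤ jj + 1)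
    (hk₁ : jj ≤ ii + k₁) (hn : ii + k₂ < n) :
    BruhatLE (ofNatFun n (blockSwap (jj + 1 - k₁) k₁ (ii + k₁ - jj)))
      (ofNatFun n (blockSwap (jj + 1 - k₂) k₂ (ii + k₂ - jj))) := by
  induction k₂, hk using Nat.le_induction with
  | base => exact Relation.ReflTransGen.refl
  | succ k hk ih =>
    have hstep := bruhatLE_blockSwap_succ (n := n) (P := jj - k) (k := k) (d := ii + k - jj)
      (by omega)
    rw [show jj - k + 1 = jj + 1 - k by omega, show jj - k = jj + 1 - (k + 1) by omega,
      show ii + k - jj + 1 = ii + (k + 1) - jj by omega] at hstep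
    exact (ih (by omega) (by omega)).trans hstep

theorem Bigrassmannian.exists_eq_ofNatFun_blockSwap {n i j : ℕ} {w : Perm (Fin n)}
    (hw : Bigrassmannian w) (hi : IsLeftDescent w i) (hj : IsRightDescent w j) :
    ∃ k, k ≤ j - 1 + 1 ∧ j - 1 < i - 1 + k ∧ i - 1 + k < n ∧
      w = ofNatFun n (blockSwap (j - 1 + 1 - k) k (i - 1 + k - (j - 1))) :=
  IsGrassmannianAt.exists_eq_ofNatFun_blockSwap
    (isGrassmannianAt_of_unique_isRightDescent hj fun _ hm => hw.2.unique hm hj)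
    (isGrassmannianAt_of_unique_isRightDescent ((isLeftDescent_iff_isRightDescent_inv w i).mp hi)
      fun m hm => hw.1.unique ((isLeftDescent_iff_isRightDescent_inv w m).mpr hm) hi)

theorem stmt2_general (n : ℕ) (i j : ℕ)
    (x y : Equiv.Perm (Fin n))
    (hx : Bigrassmannian x ∧ IsLeftDescent x i ∧ IsRightDescent x j)
    (hy : Bigrassmannian y ∧ IsLeftDescent y i ∧ IsRightDescent y j) :
    BruhatLE x y ∨ BruhatLE y x := by
  obtain ⟨kx, hkx, hjkx, hnkx, rfl⟩ := hx.1.exists_eq_ofNatFun_blockSwap hx.2.1 hx.2.2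
  obtain ⟨ky, hky, hjky, hnky, rfl⟩ := hy.1.exists_eq_ofNatFun_blockSwap hy.2.1 hy.2.2
  rcases le_total kx ky with h | h
  · exact .inl (bruhatLE_blockSwap_of_le h hky hjkx.le hnky)
  · exact .inr (bruhatLE_blockSwap_of_le h hkx hjky.le hnkx)

theorem stmt2 (n : ℕ) (hn : 2 ≤ n) (i j : ℕ)
    (hi1 : 1 ≤ i) (hi2 : i ≤ n - 1) (hj1 : 1 ≤ j) (hj2 : j ≤ n - 1)
    (x y : Equiv.Perm (Fin n))
    (hx : Bigrassmannian x ∧ IsLeftDescent x i ∧ IsRightDescent x j)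
    (hy : Bigrassmannian y ∧ IsLeftDescent y i ∧ IsRightDescent y j) :
    BruhatLE x y ∨ BruhatLE y x :=
  stmt2_general n i j x y hx hy

end Paper
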